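/- arXiv:2404.18728 — 3 statements merged into one kernel-verified Lean document; each statement's English description precedes it below -/
import Mathlib

section
/- Let n_1, …, n_ℓ be natural numbers, n = n_1 + ⋯ + n_ℓ, let T ⊂ ℝ^ℓ_+ be compact and convex, and let S_j ⊂ ℝ^{n_j}_+ be compact, convex and contain 0 for j = 1, …, ℓ. Then S = ⋃_{x ∈ T} (x_1 S_1) × ⋯ × (x_ℓ S_ℓ) is a compact convex subset of ℝ^n_+ containing 0, and its support function satisfies φ_S(ξ) = φ_T(φ_{S_1}(ξ_1), …, φ_{S_ℓ}(ξ_ℓ)) for all ξ = (ξ_1, …, ξ_ℓ) ∈ ℝ^n with ξ_j ∈ ℝ^{n_j}. -/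
open MeasureTheory Filter Topology Pointwise ENNReal

noncomputable section

/-- The positive part of an extended real number, as an element of `ℝ≥0∞`. -/
def erealPos (x : EReal) : ℝ≥0∞ :=
  if x = ⊤ then ⊤ else ENNReal.ofReal x.toReal

/-- The (signed) integral of an `EReal`-valued function over `(0, 2π]`,
with the convention `⊤ - ⊤ = ⊥` inherited from `EReal` subtraction. -/
def circleInt (g : ℝ → EReal) : EReal :=
  ((∫⁻ θ in Set.Ioc (0 : ℝ) (2 * Real.pi), erealPos (g θ)) : ℝ≥0∞)
    - ((∫⁻ θ in Set.Ioc (0 : ℝ) (2 * Real.pi), erealPos (-g θ)) : ℝ≥0∞)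

/-- The mean value of `u` over the circle `θ ↦ a + r e^{iθ} b`. -/
def cAvg {ι : Type*} (u : (ι → ℂ) → EReal) (a b : ι → ℂ) (r : ℝ) : EReal :=
  (((2 * Real.pi)⁻¹ : ℝ) : EReal) *
    circleInt fun θ => u (a + ((r : ℂ) * Complex.exp ((θ : ℂ) * Complex.I)) • b)

/-- `u : ℂ^ι → [-∞, ∞)` is plurisubharmonic: upper semicontinuous, not identically `-∞`,
and satisfying the sub-mean value inequality on every complex line. -/
def IsPsh {ι : Type*} (u : (ι → ℂ) → EReal) : Prop :=
  UpperSemicontinuous u ∧ (∃ z, u z ≠ ⊥) ∧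
    ∀ a b (r : ℝ), 0 < r → u a ≤ cAvg u a b r

/-- Plurisubharmonic on an open set `Ω`. -/
def IsPshOn {ι : Type*} (u : (ι → ℂ) → EReal) (Ω : Set (ι → ℂ)) : Prop :=
  UpperSemicontinuousOn u Ω ∧ (∃ z ∈ Ω, u z ≠ ⊥) ∧
    ∀ a b (r : ℝ), 0 < r →
      (∀ ζ : ℂ, ‖ζ‖ ≤ r → a + ζ • b ∈ Ω) → u a ≤ cAvg u a b r

/-- A set is pluripolar if it is contained in the `-∞` locus of a psh function. -/
def Pluripolar {ι : Type*} (E : Set (ι → ℂ)) : Prop :=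
  ∃ u, IsPsh u ∧ ∀ z ∈ E, u z = ⊥

/-- The support function `φ_A(ξ) = sup_{x ∈ A} ⟨x, ξ⟩` of a set `A ⊆ ℝ^ι`. -/
def suppFn {ι : Type*} [Fintype ι] (A : Set (ι → ℝ)) (ξ : ι → ℝ) : ℝ :=
  sSup ((fun x => ∑ i, x i * ξ i) '' A)

/-- The support function extended (monotonically) to `EReal`-valued arguments. -/
def suppFnE {ι : Type*} [Fintype ι] (A : Set (ι → ℝ)) (ξ : ι → EReal) : EReal :=
  ⨆ x ∈ A, ∑ i, (x i : EReal) * ξ i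

/-- The logarithmic support function
`H_S(z) = limsup_{(ℂ*)^ι ∋ w → z} φ_S(log|w_1|, …, log|w_ι|)`;
on `(ℂ*)^ι` this agrees with `φ_S ∘ Log`. -/
def HS {ι : Type*} [Fintype ι] (S : Set (ι → ℝ)) (z : ι → ℂ) : ℝ :=
  limsup (fun w : ι → ℂ => suppFn S fun i => Real.log ‖w i‖)
    (𝓝[{w : ι → ℂ | ∀ i, w i ≠ 0}] z)

/-- The Lelong class `L^S(ℂ^ι)`: psh functions with `u ≤ H_S + c` for some constant. -/
def Lelong {ι : Type*} [Fintype ι] (S : Set (ι → ℝ)) (u : (ι → ℂ) → EReal) : Prop :=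
  IsPsh u ∧ ∃ c : ℝ, ∀ z, u z ≤ ((HS S z + c : ℝ) : EReal)

/-- The class `L^S_+(ℂ^ι)`: psh functions with `H_S - c ≤ u ≤ H_S + c`. -/
def LelongPlus {ι : Type*} [Fintype ι] (S : Set (ι → ℝ)) (u : (ι → ℂ) → EReal) : Prop :=
  IsPsh u ∧ ∃ c : ℝ, ∀ z, ((HS S z - c : ℝ) : EReal) ≤ u z ∧ u z ≤ ((HS S z + c : ℝ) : EReal)

/-- The weighted Siciak–Zakharyuta function
`V^S_{K,q}(z) = sup { u(z) : u ∈ L^S(ℂ^ι), u ≤ q on K }`. -/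
def SZw {ι : Type*} [Fintype ι] (S : Set (ι → ℝ)) (K : Set (ι → ℂ))
    (q : (ι → ℂ) → EReal) (z : ι → ℂ) : ℝ :=
  sSup {t : ℝ | ∃ u, Lelong S u ∧ (∀ w ∈ K, u w ≤ q w) ∧ (t : EReal) ≤ u z}

/-- The Siciak–Zakharyuta function `V^S_K` (weight `q = 0`). -/
def SZ {ι : Type*} [Fintype ι] (S : Set (ι → ℝ)) (K : Set (ι → ℂ)) (z : ι → ℂ) : ℝ :=
  SZw S K 0 z

/-- Upper semicontinuous regularization of a real-valued function. -/
def uscReg {ι : Type*} (f : (ι → ℂ) → ℝ) (z : ι → ℂ) : ℝ := limsup f (𝓝 z)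

/-- An admissible weight on `K`: lower semicontinuous, `(-∞, ∞]`-valued,
and finite on a non-pluripolar set. -/
def Admissible {ι : Type*} [Fintype ι] (K : Set (ι → ℂ)) (q : (ι → ℂ) → EReal) : Prop :=
  LowerSemicontinuousOn q K ∧ (∀ z ∈ K, q z ≠ ⊥) ∧ ¬ Pluripolar {z ∈ K | q z ≠ ⊤}

/-- `v` is maximal on the open set `Ω`: for every relatively compact open `G` with
closure in `Ω` and every psh `w` on `Ω` with `w ≤ v` on `∂G`, one has `w ≤ v` on `G`. -/
def MaximalOn {ι : Type*} (v : (ι → ℂ) → EReal) (Ω : Set (ι → ℂ)) : Prop :=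
  ∀ G : Set (ι → ℂ), IsOpen G → IsCompact (closure G) → closure G ⊆ Ω →
    ∀ w, IsPshOn w Ω → (∀ z ∈ frontier G, w z ≤ v z) → ∀ z ∈ G, w z ≤ v z

/-- The standard simplex `Σ = ch{0, e₁, …, e_n}` in `ℝ^ι`. -/
def simplex0 (ι : Type*) [Fintype ι] : Set (ι → ℝ) :=
  {x | (∀ i, 0 ≤ x i) ∧ ∑ i, x i ≤ 1}

/-- `A` is a lower set: with each `s ∈ A` it contains the box `[0,s₁] × ⋯ × [0,s_n]`. -/
def BoxLower {ι : Type*} (A : Set (ι → ℝ)) : Prop :=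
  ∀ s ∈ A, ∀ x : ι → ℝ, (∀ i, 0 ≤ x i) → (∀ i, x i ≤ s i) → x ∈ A

/-- The lower hull of `S`: the smallest lower set containing `S`. -/
def lowerHull {ι : Type*} (S : Set (ι → ℝ)) : Set (ι → ℝ) :=
  ⋂₀ {A | S ⊆ A ∧ BoxLower A}

end

/-! `S` is the image of the compact set `T × S₁ × ⋯ × S_ℓ` under the continuous map
`(x, s) ↦ (x_j s_j)_j`. Convexity holds blockwise because `a • C + b • C = (a + b) • C` for a
convex `C` and `a, b ≥ 0`. For the support function,
`⟨(x_j s_j)_j, ξ⟩ = ∑ⱼ x_j ⟨s_j, ξ_j⟩ ≤ ∑ⱼ x_j φ_{S_j}(ξ_j) ≤ φ_T(φ_{S₁}(ξ₁), …, φ_{S_ℓ}(ξ_ℓ))`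
since `x ≥ 0`, and taking `x` and the `s_j` to be maximisers turns both inequalities into
equalities. -/

theorem IsCompact.isGreatest_suppFn {ι : Type*} [Fintype ι] {A : Set (ι → ℝ)}
    (hA : IsCompact A) (hne : A.Nonempty) (ξ : ι → ℝ) :
    IsGreatest ((· ⬝ᵥ ξ) '' A) (suppFn A ξ) :=
  (hA.image (continuous_id.dotProduct continuous_const)).isGreatest_sSup (hne.image _)

section ScaledProduct

variable {ι : Type*} {κ : ι → Type*}

def blockScale (x : ι → ℝ) (s : ∀ j, κ j → ℝ) : (Σ j, κ j) → ℝ :=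
  fun q => x q.1 * s q.1 q.2

def scaledProduct (T : Set (ι → ℝ)) (S : ∀ j, Set (κ j → ℝ)) : Set ((Σ j, κ j) → ℝ) :=
  {ξ | ∃ x ∈ T, ∀ j, (fun i => ξ ⟨j, i⟩) ∈ x j • S j}

theorem continuous_blockScale :
    Continuous fun p : (ι → ℝ) × (∀ j, κ j → ℝ) => blockScale p.1 p.2 :=
  continuous_pi fun q => ((continuous_apply q.1).comp continuous_fst).mul
    ((continuous_apply q.2).comp ((continuous_apply q.1).comp continuous_snd))

theorem scaledProduct_eq_image (T : Set (ι → ℝ)) (S : ∀ j, Set (κ j → ℝ)) :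
    scaledProduct T S = (fun p => blockScale p.1 p.2) '' (T ×ˢ Set.univ.pi S) := by
  ext ξ
  constructor
  · rintro ⟨x, hxT, hx⟩
    choose s hs hxs using fun j => Set.mem_smul_set.1 (hx j)
    exact ⟨(x, s), ⟨hxT, fun j _ => hs j⟩, funext fun q => congrFun (hxs q.1) q.2⟩
  · rintro ⟨⟨x, s⟩, ⟨hxT, hs⟩, rfl⟩
    exact ⟨x, hxT, fun j => ⟨s j, hs j (Set.mem_univ j), rfl⟩⟩

theorem IsCompact.scaledProduct {T : Set (ι → ℝ)} {S : ∀ j, Set (κ j → ℝ)}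
    (hT : IsCompact T) (hS : ∀ j, IsCompact (S j)) : IsCompact (scaledProduct T S) := by
  rw [scaledProduct_eq_image]
  exact (hT.prod (isCompact_univ_pi hS)).image continuous_blockScale

theorem Convex.scaledProduct {T : Set (ι → ℝ)} {S : ∀ j, Set (κ j → ℝ)} (hT : Convex ℝ T)
    (hT_nonneg : ∀ x ∈ T, ∀ j, 0 ≤ x j) (hS : ∀ j, Convex ℝ (S j)) :
    Convex ℝ (scaledProduct T S) := by
  rintro ξ ⟨x, hxT, hx⟩ ξ' ⟨x', hx'T, hx'⟩ a b ha hb hab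
  refine ⟨a • x + b • x', hT hxT hx'T ha hb hab, fun j => ?_⟩
  have hsum := Set.add_mem_add (Set.smul_mem_smul_set (a := a) (hx j))
    (Set.smul_mem_smul_set (a := b) (hx' j))
  rwa [smul_smul, smul_smul, ← (hS j).add_smul (mul_nonneg ha (hT_nonneg x hxT j))
    (mul_nonneg hb (hT_nonneg x' hx'T j))] at hsum

theorem scaledProduct_nonneg {T : Set (ι → ℝ)} {S : ∀ j, Set (κ j → ℝ)}
    (hT : ∀ x ∈ T, ∀ j, 0 ≤ x j) (hS : ∀ j, ∀ s ∈ S j, ∀ i, 0 ≤ s i) :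
    ∀ ξ ∈ scaledProduct T S, ∀ q, 0 ≤ ξ q := by
  rw [scaledProduct_eq_image]
  rintro _ ⟨⟨x, s⟩, ⟨hxT, hs⟩, rfl⟩ q
  exact mul_nonneg (hT x hxT q.1) (hS q.1 (s q.1) (hs q.1 (Set.mem_univ _)) q.2)

theorem zero_mem_scaledProduct {T : Set (ι → ℝ)} {S : ∀ j, Set (κ j → ℝ)}
    (hT : T.Nonempty) (hS : ∀ j, (0 : κ j → ℝ) ∈ S j) : (0 : (Σ j, κ j) → ℝ) ∈ scaledProduct T S :=
  let ⟨x, hxT⟩ := hT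
  ⟨x, hxT, fun j => ⟨0, hS j, smul_zero _⟩⟩

variable [Fintype ι] [∀ j, Fintype (κ j)]

theorem blockScale_dotProduct (x : ι → ℝ) (s : ∀ j, κ j → ℝ) (η : (Σ j, κ j) → ℝ) :
    blockScale x s ⬝ᵥ η = ∑ j, x j * (s j ⬝ᵥ fun i => η ⟨j, i⟩) := by
  simp only [dotProduct, blockScale, Fintype.sum_sigma, Finset.mul_sum, mul_assoc]

theorem suppFn_scaledProduct {T : Set (ι → ℝ)} {S : ∀ j, Set (κ j → ℝ)}
    (hTne : T.Nonempty) (hTc : IsCompact T) (hT_nonneg : ∀ x ∈ T, ∀ j, 0 ≤ x j)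
    (hSne : ∀ j, (S j).Nonempty) (hSc : ∀ j, IsCompact (S j)) (η : (Σ j, κ j) → ℝ) :
    suppFn (scaledProduct T S) η = suppFn T fun j => suppFn (S j) fun i => η ⟨j, i⟩ := by
  set y : ι → ℝ := fun j => suppFn (S j) fun i => η ⟨j, i⟩
  have hS_max j := (hSc j).isGreatest_suppFn (hSne j) fun i => η ⟨j, i⟩
  have hT_max := hTc.isGreatest_suppFn hTne y
  have hne : (scaledProduct T S).Nonempty := by
    rw [scaledProduct_eq_image]
    exact (hTne.prod (Set.univ_pi_nonempty_iff.2 hSne)).image _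
  have h_max := (hTc.scaledProduct hSc).isGreatest_suppFn hne η
  rw [scaledProduct_eq_image] at h_max ⊢
  apply le_antisymm
  · obtain ⟨⟨_, ⟨⟨x, s⟩, ⟨hxT, hs⟩, rfl⟩, hζ⟩, -⟩ := h_max
    rw [← hζ]
    calc blockScale x s ⬝ᵥ η = ∑ j, x j * (s j ⬝ᵥ fun i => η ⟨j, i⟩) := blockScale_dotProduct ..
      _ ≤ x ⬝ᵥ y := Finset.sum_le_sum fun j _ => mul_le_mul_of_nonneg_left
          ((hS_max j).2 ⟨s j, hs j (Set.mem_univ j), rfl⟩) (hT_nonneg x hxT j)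
      _ ≤ suppFn T y := hT_max.2 ⟨x, hxT, rfl⟩
  · obtain ⟨⟨x, hxT, hx⟩, -⟩ := hT_max
    rw [← hx]
    choose s hs hsy using fun j => (hS_max j).1
    calc x ⬝ᵥ y = blockScale x s ⬝ᵥ η := by
          rw [blockScale_dotProduct]
          exact Finset.sum_congr rfl fun j _ => congrArg (x j * ·) (hsy j).symm
      _ ≤ suppFn _ η := h_max.2 ⟨_, ⟨(x, s), ⟨hxT, fun j _ => hs j⟩, rfl⟩, rfl⟩

end ScaledProduct

/-- The set `S = ⋃_{x ∈ T} (x₁S₁) × ⋯ × (x_ℓ S_ℓ)` is compact, convex, contained in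
`ℝ^n_+`, contains `0`, and its support function is `φ_S(ξ) = φ_T(φ_{S₁}(ξ₁), …, φ_{S_ℓ}(ξ_ℓ))`. -/
theorem stmt9 (ℓ : ℕ) (n : Fin ℓ → ℕ)
    (T : Set (Fin ℓ → ℝ)) (hTne : T.Nonempty) (hTc : IsCompact T) (hTconv : Convex ℝ T)
    (hTpos : ∀ x ∈ T, ∀ j, 0 ≤ x j)
    (S : (j : Fin ℓ) → Set (Fin (n j) → ℝ))
    (hSc : ∀ j, IsCompact (S j)) (hSconv : ∀ j, Convex ℝ (S j))
    (hSpos : ∀ j, ∀ s ∈ S j, ∀ i, 0 ≤ s i)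
    (hS0 : ∀ j, (0 : Fin (n j) → ℝ) ∈ S j)
    (Sbig : Set (((j : Fin ℓ) × Fin (n j)) → ℝ))
    (hSbig : Sbig = {ξ | ∃ x ∈ T, ∀ j, (fun i => ξ ⟨j, i⟩) ∈ x j • S j}) :
    IsCompact Sbig ∧ Convex ℝ Sbig ∧ (∀ ξ ∈ Sbig, ∀ i, 0 ≤ ξ i) ∧
      (0 : ((j : Fin ℓ) × Fin (n j)) → ℝ) ∈ Sbig ∧
      ∀ ξ : ((j : Fin ℓ) × Fin (n j)) → ℝ,
        suppFn Sbig ξ = suppFn T (fun j => suppFn (S j) (fun i => ξ ⟨j, i⟩)) := by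
  subst hSbig
  exact ⟨hTc.scaledProduct hSc, hTconv.scaledProduct hTpos hSconv,
    scaledProduct_nonneg hTpos hSpos, zero_mem_scaledProduct hTne hS0,
    suppFn_scaledProduct hTne hTc hTpos (fun j => ⟨0, hS0 j⟩) hSc⟩
end

section
/- Let n_1, …, n_ℓ be natural numbers, n = n_1 + ⋯ + n_ℓ, let T ⊂ ℝ^ℓ_+ be compact and convex, let S_j ⊂ ℝ^{n_j}_+ be compact, convex and contain 0 for j = 1, …, ℓ, and let S = ⋃_{x ∈ T} (x_1 S_1) × ⋯ × (x_ℓ S_ℓ) ⊂ ℝ^n_+. Then the logarithmic support functions satisfy H_S(z) = φ_T(H_{S_1}(z_1), …, H_{S_ℓ}(z_ℓ)) for all z = (z_1, …, z_ℓ) ∈ ℂ^n with z_j ∈ ℂ^{n_j}. -/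
open MeasureTheory Filter Topology Pointwise ENNReal

/-!
Choosing maximisers block by block shows that the support function of
`⋃_{x ∈ T} x₁S₁ × ⋯ × x_ℓS_ℓ` is `ξ ↦ φ_T(φ_{S₁}(ξ₁), …, φ_{S_ℓ}(ξ_ℓ))`. Near `z`, the filter
`𝓝[(ℂ*)ⁿ] z` is the product of the blockwise filters `𝓝[(ℂ*)^{n_j}] z_j`, so the blocks of `w`
can be moved independently; since `φ_T` is monotone (`T ⊂ ℝ^ℓ_+`) and continuous (`T` compact),
the limsup therefore passes through `φ_T`.
-/

namespace Filter

variable {ι : Type*} {α : ι → Type*}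

theorem frequently_pi_of_forall {F : ∀ i, Filter (α i)} {p : ∀ i, α i → Prop}
    (h : ∀ i, ∃ᶠ x in F i, p i x) : ∃ᶠ x in pi F, ∀ i, p i (x i) := by
  simp only [frequently_iff_neBot] at h ⊢
  convert pi_inf_principal_univ_pi_neBot.2 h
  ext x
  simp

theorem map_piCurry_pi {κ : ι → Type*} {β : ∀ i, κ i → Type*}
    (F : ∀ k : Σ i, κ i, Filter (β k.1 k.2)) :
    map (Equiv.piCurry β) (pi F) = pi fun i => pi fun j => F ⟨i, j⟩ := by
  rw [← Equiv.symm_symm (Equiv.piCurry β), map_equiv_symm]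
  simp only [pi, comap_iInf, comap_comap, iInf_sigma]
  rfl

end Filter

open Filter Topology

theorem nhdsWithin_forall_ne_zero_eq_pi {ι : Type*} [Finite ι] (z : ι → ℂ) :
    𝓝[{w | ∀ i, w i ≠ 0}] z = pi fun i => 𝓝[{0}ᶜ] (z i) := by
  have hset : {w : ι → ℂ | ∀ i, w i ≠ 0} = Set.univ.pi fun _ => {0}ᶜ := by ext; simp
  rw [hset, nhdsWithin_pi_univ_eq]
  rfl

instance nhdsWithin_compl_zero_neBot (x : ℂ) : (𝓝[{0}ᶜ] x).NeBot :=
  mem_closure_iff_nhdsWithin_neBot.1 (dense_compl_singleton 0 x)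

theorem limsup_pi_comp {ι : Type*} [Finite ι] {X : ι → Type*} {F : ∀ i, Filter (X i)}
    [∀ i, (F i).NeBot] {f : ∀ i, X i → ℝ}
    (hle : ∀ i, (F i).IsBoundedUnder (· ≤ ·) (f i)) (hge : ∀ i, (F i).IsBoundedUnder (· ≥ ·) (f i))
    {Φ : (ι → ℝ) → ℝ} (hΦ : Monotone Φ) (hΦc : Continuous Φ) :
    limsup (fun x => Φ fun i => f i (x i)) (pi F) = Φ fun i => limsup (f i) (F i) := by
  set L := fun i => limsup (f i) (F i)
  choose M hM using fun i => (hle i).eventually_le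
  choose m hm using fun i => (hge i).eventually_ge
  have hbdd : (pi F).IsBoundedUnder (· ≤ ·) fun x => Φ fun i => f i (x i) :=
    ⟨Φ M, eventually_map.2 <| (eventually_pi hM).mono fun x hx => hΦ hx⟩
  have hcobdd : (pi F).IsCoboundedUnder (· ≤ ·) fun x => Φ fun i => f i (x i) :=
    IsBoundedUnder.isCoboundedUnder_flip
      ⟨Φ m, eventually_map.2 <| (eventually_pi hm).mono fun x hx => hΦ hx⟩
  have hup : Tendsto (fun δ : ℝ => Φ fun i => L i + δ) (𝓝[>] 0) (𝓝 (Φ L)) := by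
    have hcont : Continuous fun δ : ℝ => Φ fun i => L i + δ := by fun_prop
    simpa using (hcont.tendsto 0).mono_left nhdsWithin_le_nhds
  have hdown : Tendsto (fun δ : ℝ => Φ fun i => L i - δ) (𝓝[>] 0) (𝓝 (Φ L)) := by
    have hcont : Continuous fun δ : ℝ => Φ fun i => L i - δ := by fun_prop
    simpa using (hcont.tendsto 0).mono_left nhdsWithin_le_nhds
  apply le_antisymm
  · refine ge_of_tendsto hup (eventually_nhdsWithin_of_forall fun δ (hδ : 0 < δ) => ?_)
    refine limsup_le_of_le hcobdd ((eventually_pi (p := fun i y => f i y ≤ L i + δ)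
      fun i => ?_).mono fun x hx => hΦ hx)
    exact (eventually_lt_of_limsup_lt (lt_add_of_pos_right _ hδ) (hle i)).mono fun _ h => h.le
  · refine le_of_tendsto hdown (eventually_nhdsWithin_of_forall fun δ (hδ : 0 < δ) => ?_)
    refine le_limsup_of_frequently_le ((frequently_pi_of_forall
      (p := fun i y => L i - δ ≤ f i y) fun i => ?_).mono
      fun x hx => hΦ hx) hbdd
    exact (frequently_lt_of_lt_limsup (hge i).isCoboundedUnder_flip
      (sub_lt_self _ hδ)).mono fun _ h => h.le

section SupportFunction

variable {ι : Type*} [Fintype ι] {A : Set (ι → ℝ)}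

theorem continuous_suppFn (hA : IsCompact A) : Continuous (suppFn A) :=
  hA.continuous_sSup (f := fun (ξ x : ι → ℝ) => ∑ i, x i * ξ i) (by fun_prop)

theorem le_suppFn (hA : IsCompact A) (ξ : ι → ℝ) {x : ι → ℝ} (hx : x ∈ A) :
    ∑ i, x i * ξ i ≤ suppFn A ξ :=
  le_csSup (hA.bddAbove_image (by fun_prop)) ⟨x, hx, rfl⟩

theorem suppFn_le (hne : A.Nonempty) {ξ : ι → ℝ} {c : ℝ} (h : ∀ x ∈ A, ∑ i, x i * ξ i ≤ c) :
    suppFn A ξ ≤ c :=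
  csSup_le (hne.image _) (Set.forall_mem_image.2 h)

theorem exists_sum_mul_eq_suppFn (hA : IsCompact A) (hne : A.Nonempty) (ξ : ι → ℝ) :
    ∃ x ∈ A, ∑ i, x i * ξ i = suppFn A ξ :=
  (hA.image (f := fun x : ι → ℝ => ∑ i, x i * ξ i) (by fun_prop)).sSup_mem (hne.image _)

theorem suppFn_nonneg (hA : IsCompact A) (h0 : 0 ∈ A) (ξ : ι → ℝ) : 0 ≤ suppFn A ξ := by
  simpa using le_suppFn hA ξ h0

theorem monotone_suppFn (hA : IsCompact A) (hne : A.Nonempty) (hpos : ∀ x ∈ A, ∀ i, 0 ≤ x i) :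
    Monotone (suppFn A) := fun _ η hle =>
  suppFn_le hne fun x hx => (Finset.sum_le_sum fun i _ =>
    mul_le_mul_of_nonneg_left (hle i) (hpos x hx i)).trans (le_suppFn hA η hx)

end SupportFunction

theorem suppFn_sigma {ι : Type*} [Fintype ι] {κ : ι → Type*} [∀ j, Fintype (κ j)]
    {T : Set (ι → ℝ)} (hT : IsCompact T) (hTne : T.Nonempty) (hTpos : ∀ x ∈ T, ∀ j, 0 ≤ x j)
    {S : ∀ j, Set (κ j → ℝ)} (hS : ∀ j, IsCompact (S j)) (hSne : ∀ j, (S j).Nonempty)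
    (ξ : (Σ j, κ j) → ℝ) :
    suppFn {s | ∃ x ∈ T, ∀ j, (fun i => s ⟨j, i⟩) ∈ x j • S j} ξ =
      suppFn T fun j => suppFn (S j) fun i => ξ ⟨j, i⟩ := by
  set Φ := suppFn T fun j => suppFn (S j) fun i => ξ ⟨j, i⟩
  set Sσ := {s : (Σ j, κ j) → ℝ | ∃ x ∈ T, ∀ j, (fun i => s ⟨j, i⟩) ∈ x j • S j}
  have hregroup : ∀ (x : ι → ℝ) (t : ∀ j, κ j → ℝ) (s : (Σ j, κ j) → ℝ),
      (∀ k, s k = x k.1 * t k.1 k.2) → ∑ k, s k * ξ k = ∑ j, x j * ∑ i, t j i * ξ ⟨j, i⟩ := by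
    intro x t s hs
    simp only [Fintype.sum_sigma, hs, Finset.mul_sum, mul_assoc]
  have hub : ∀ s ∈ Sσ, ∑ k, s k * ξ k ≤ Φ := by
    rintro s ⟨x, hx, hs⟩
    choose t ht hts using fun j => Set.mem_smul_set.1 (hs j)
    rw [hregroup x t s fun k => (congrFun (hts k.1) k.2).symm]
    exact (Finset.sum_le_sum fun j _ => mul_le_mul_of_nonneg_left
      (le_suppFn (hS j) _ (ht j)) (hTpos x hx j)).trans (le_suppFn hT _ hx)
  refine le_antisymm (suppFn_le ?_ hub) (suppFn_le hTne fun x hx => ?_)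
  · obtain ⟨x, hx⟩ := hTne
    choose t ht using hSne
    exact ⟨fun k => x k.1 * t k.1 k.2, x, hx, fun j => ⟨t j, ht j, rfl⟩⟩
  choose t ht hteq using fun j => exists_sum_mul_eq_suppFn (hS j) (hSne j) fun i => ξ ⟨j, i⟩
  have hs : (fun k => x k.1 * t k.1 k.2) ∈ Sσ :=
    ⟨x, hx, fun j => ⟨t j, ht j, rfl⟩⟩
  calc ∑ j, x j * suppFn (S j) (fun i => ξ ⟨j, i⟩)
      = ∑ k, x k.1 * t k.1 k.2 * ξ k := by
        simp only [← hteq, hregroup x t _ fun _ => rfl]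
    _ ≤ _ := le_csSup ⟨Φ, Set.forall_mem_image.2 hub⟩ ⟨_, hs, rfl⟩

section LogSupportFunction

variable {ι : Type*} [Fintype ι] {S : Set (ι → ℝ)}

/-- `φ_S ∘ Log` on `(ℂ*)^ι`. -/
noncomputable def logSuppFn (S : Set (ι → ℝ)) (w : ι → ℂ) : ℝ :=
  suppFn S fun i => Real.log ‖w i‖

theorem HS_eq_limsup_pi (S : Set (ι → ℝ)) (z : ι → ℂ) :
    HS S z = limsup (logSuppFn S) (pi fun i => 𝓝[{0}ᶜ] (z i)) := by
  rw [HS, nhdsWithin_forall_ne_zero_eq_pi]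
  rfl

theorem isBoundedUnder_le_logSuppFn (hS : IsCompact S) (hne : S.Nonempty)
    (hpos : ∀ s ∈ S, ∀ i, 0 ≤ s i) (z : ι → ℂ) :
    (pi fun i => 𝓝[{0}ᶜ] (z i)).IsBoundedUnder (· ≤ ·) (logSuppFn S) := by
  refine isBoundedUnder_of_eventually_le (a := suppFn S fun i => Real.log (‖z i‖ + 1)) ?_
  refine (eventually_pi (p := fun i y => Real.log ‖y‖ ≤ Real.log (‖z i‖ + 1))
    fun i => ?_).mono fun w hw => monotone_suppFn hS hne hpos hw
  have hnear : ∀ᶠ y in 𝓝 (z i), ‖y‖ < ‖z i‖ + 1 :=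
    continuous_norm.continuousAt.eventually_lt continuousAt_const (lt_add_one _)
  filter_upwards [nhdsWithin_le_nhds hnear, self_mem_nhdsWithin] with y hy hy0
  exact Real.log_le_log (norm_pos_iff.2 hy0) hy.le

theorem isBoundedUnder_ge_logSuppFn (hS : IsCompact S) (h0 : 0 ∈ S) (F : Filter (ι → ℂ)) :
    F.IsBoundedUnder (· ≥ ·) (logSuppFn S) :=
  isBoundedUnder_of_eventually_ge (a := 0) (.of_forall fun _ => suppFn_nonneg hS h0 _)

end LogSupportFunction

theorem stmt10_general (ℓ : ℕ) (n : Fin ℓ → ℕ)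
    (T : Set (Fin ℓ → ℝ)) (hTne : T.Nonempty) (hTc : IsCompact T)
    (hTpos : ∀ x ∈ T, ∀ j, 0 ≤ x j)
    (S : (j : Fin ℓ) → Set (Fin (n j) → ℝ))
    (hSc : ∀ j, IsCompact (S j))
    (hSpos : ∀ j, ∀ s ∈ S j, ∀ i, 0 ≤ s i)
    (hS0 : ∀ j, (0 : Fin (n j) → ℝ) ∈ S j)
    (Sbig : Set (((j : Fin ℓ) × Fin (n j)) → ℝ))
    (hSbig : Sbig = {ξ | ∃ x ∈ T, ∀ j, (fun i => ξ ⟨j, i⟩) ∈ x j • S j})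
    (z : ((j : Fin ℓ) × Fin (n j)) → ℂ) :
    HS Sbig z = suppFn T (fun j => HS (S j) (fun i => z ⟨j, i⟩)) := by
  have hSne : ∀ j, (S j).Nonempty := fun j => ⟨0, hS0 j⟩
  have hsplit : logSuppFn Sbig =
      (fun v => suppFn T fun j => logSuppFn (S j) (v j)) ∘ Equiv.piCurry fun _ _ => ℂ :=
    funext fun w => hSbig ▸ suppFn_sigma hTc hTne hTpos hSc hSne _
  simp only [HS_eq_limsup_pi, hsplit, limsup_comp, map_piCurry_pi]
  exact limsup_pi_comp (fun j => isBoundedUnder_le_logSuppFn (hSc j) (hSne j) (hSpos j) _)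
    (fun j => isBoundedUnder_ge_logSuppFn (hSc j) (hS0 j) _)
    (monotone_suppFn hTc hTne hTpos) (continuous_suppFn hTc)

/-- The logarithmic support functions satisfy
`H_S(z) = φ_T(H_{S₁}(z₁), …, H_{S_ℓ}(z_ℓ))` for `S = ⋃_{x ∈ T} (x₁S₁) × ⋯ × (x_ℓ S_ℓ)`. -/
theorem stmt10 (ℓ : ℕ) (n : Fin ℓ → ℕ)
    (T : Set (Fin ℓ → ℝ)) (hTne : T.Nonempty) (hTc : IsCompact T) (hTconv : Convex ℝ T)
    (hTpos : ∀ x ∈ T, ∀ j, 0 ≤ x j)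
    (S : (j : Fin ℓ) → Set (Fin (n j) → ℝ))
    (hSc : ∀ j, IsCompact (S j)) (hSconv : ∀ j, Convex ℝ (S j))
    (hSpos : ∀ j, ∀ s ∈ S j, ∀ i, 0 ≤ s i)
    (hS0 : ∀ j, (0 : Fin (n j) → ℝ) ∈ S j)
    (Sbig : Set (((j : Fin ℓ) × Fin (n j)) → ℝ))
    (hSbig : Sbig = {ξ | ∃ x ∈ T, ∀ j, (fun i => ξ ⟨j, i⟩) ∈ x j • S j})
    (z : ((j : Fin ℓ) × Fin (n j)) → ℂ) :
    HS Sbig z = suppFn T (fun j => HS (S j) (fun i => z ⟨j, i⟩)) :=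
  stmt10_general ℓ n T hTne hTc hTpos S hSc hSpos hS0 Sbig hSbig z
end

section
/- Let S ≠ {0} be a compact convex subset of ℝ^n_+ containing 0 which is not a simplex, i.e. S ≠ ch{0, x_1 e_1, …, x_n e_n} for every x ∈ ℝ^n_+. Then there exists t_0 > 0 such that for every t > t_0 the sublevel set {z ∈ ℂ^n : H_S(z) ≤ t} is not convex. -/
open MeasureTheory Filter Topology Pointwise ENNReal

/-!
Write `φ = suppFn S`. If the sublevel set `{φ ≤ 1}` is closed under the coordinatewise maximum,
then by homogeneity `φ (ξ ⊔ η) ≤ max (φ ξ) (φ η)`. Bounding `φ` through the coordinate vectors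
then shows that `φ` is dominated by the support function of the simplex with vertices `0` and
`φ(eᵢ) eᵢ`, so (by separation) `S` is that simplex.

Otherwise there are `ξ, η` with `φ ξ, φ η ≤ 1 < φ (ξ ⊔ η)`. The points `z = e^{tξ}` and
`w = e^{tη}` lie in `{H_S ≤ t}`, while `log |(z + w) / 2| ≥ t (ξ ⊔ η) - log 2` coordinatewise, so
`H_S ((z + w) / 2) ≥ t φ (ξ ⊔ η) - log 2 · φ 1`, which exceeds `t` once `t` is large.
-/

lemma smul_sup_of_nonneg {ι : Type*} {c : ℝ} (hc : 0 ≤ c) (ξ η : ι → ℝ) :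
    c • (ξ ⊔ η) = c • ξ ⊔ c • η :=
  funext fun i => smul_max_of_nonneg hc (ξ i) (η i)

section SupportFunction

variable {ι : Type*} [Fintype ι] {S : Set (ι → ℝ)}

lemma suppFn_eq_sSup_image_dotProduct (ξ : ι → ℝ) : suppFn S ξ = sSup ((· ⬝ᵥ ξ) '' S) := rfl

lemma continuous_dotProduct_left (ξ : ι → ℝ) : Continuous (· ⬝ᵥ ξ) :=
  continuous_id.dotProduct continuous_const

lemma dotProduct_le_suppFn (hSc : IsCompact S) {s : ι → ℝ} (hs : s ∈ S) (ξ : ι → ℝ) :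
    s ⬝ᵥ ξ ≤ suppFn S ξ :=
  le_csSup (hSc.image (continuous_dotProduct_left ξ)).bddAbove (Set.mem_image_of_mem _ hs)

lemma suppFn_le_s15 (hne : S.Nonempty) {ξ : ι → ℝ} {c : ℝ} (h : ∀ s ∈ S, s ⬝ᵥ ξ ≤ c) :
    suppFn S ξ ≤ c :=
  csSup_le (hne.image _) (Set.forall_mem_image.2 h)

lemma exists_mem_suppFn_eq (hSc : IsCompact S) (hne : S.Nonempty) (ξ : ι → ℝ) :
    ∃ s ∈ S, s ⬝ᵥ ξ = suppFn S ξ :=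
  (hSc.image (continuous_dotProduct_left ξ)).sSup_mem (hne.image _)

lemma suppFn_nonneg_s15 (hSc : IsCompact S) (hS0 : 0 ∈ S) (ξ : ι → ℝ) : 0 ≤ suppFn S ξ := by
  simpa using dotProduct_le_suppFn hSc hS0 ξ

lemma suppFn_smul {c : ℝ} (hc : 0 ≤ c) (ξ : ι → ℝ) : suppFn S (c • ξ) = c * suppFn S ξ := by
  simp only [suppFn_eq_sSup_image_dotProduct, dotProduct_smul, ← smul_eq_mul (a := c),
    ← Real.sSup_smul_of_nonneg hc, ← Set.image_smul, Set.image_image]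

lemma suppFn_zero : suppFn S 0 = 0 := by
  simpa using suppFn_smul (S := S) le_rfl 0

lemma suppFn_add_le (hSc : IsCompact S) (hne : S.Nonempty) (ξ η : ι → ℝ) :
    suppFn S (ξ + η) ≤ suppFn S ξ + suppFn S η :=
  suppFn_le_s15 hne fun s hs => by
    rw [dotProduct_add]
    exact add_le_add (dotProduct_le_suppFn hSc hs ξ) (dotProduct_le_suppFn hSc hs η)

lemma monotone_suppFn_s15 (hSc : IsCompact S) (hne : S.Nonempty) (hSpos : ∀ s ∈ S, 0 ≤ s) :
    Monotone (suppFn S) := fun _ η h =>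
  suppFn_le_s15 hne fun s hs =>
    (dotProduct_le_dotProduct_of_nonneg_left h (hSpos s hs)).trans (dotProduct_le_suppFn hSc hs η)

lemma continuous_suppFn_s15 (hSc : IsCompact S) : Continuous (suppFn S) :=
  hSc.continuous_sSup (f := fun ξ s => s ⬝ᵥ ξ) (continuous_snd.dotProduct continuous_fst)

end SupportFunction

section LogSupportFunction

variable {ι : Type*} [Fintype ι] {S : Set (ι → ℝ)}

lemma HS_eq_suppFn_log (hSc : IsCompact S) {z : ι → ℂ} (hz : ∀ i, z i ≠ 0) :
    HS S z = suppFn S fun i => Real.log ‖z i‖ := by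
  have hnhds : 𝓝[{w : ι → ℂ | ∀ i, w i ≠ 0}] z = 𝓝 z :=
    nhdsWithin_eq_nhds.2 <| eventually_all.2 fun i =>
      (continuous_apply i).continuousAt.eventually_ne (hz i)
  have hcont : ContinuousAt (fun w : ι → ℂ => suppFn S fun i => Real.log ‖w i‖) z :=
    (continuous_suppFn_s15 hSc).continuousAt.comp <| continuousAt_pi.2 fun i =>
      (continuous_norm.comp (continuous_apply i)).continuousAt.log (norm_ne_zero_iff.2 (hz i))
  rw [HS, hnhds, hcont.tendsto.limsup_eq]

noncomputable def ofRealExp (ζ : ι → ℝ) : ι → ℂ := fun i => (Real.exp (ζ i) : ℂ)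

lemma HS_ofRealExp (hSc : IsCompact S) (ζ : ι → ℝ) : HS S (ofRealExp ζ) = suppFn S ζ := by
  rw [HS_eq_suppFn_log hSc (z := ofRealExp ζ) fun i =>
    Complex.ofReal_ne_zero.2 (Real.exp_ne_zero _)]
  congr 1 with i
  rw [ofRealExp, Complex.norm_real, Real.norm_of_nonneg (Real.exp_pos _).le, Real.log_exp]

lemma max_sub_log_two_le_log_add_exp_div_two (a b : ℝ) :
    max a b - Real.log 2 ≤ Real.log ((Real.exp a + Real.exp b) / 2) := by
  rw [Real.log_div (by positivity) two_ne_zero, sub_le_sub_iff_right,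
    ← Real.log_exp (max a b)]
  refine Real.log_le_log (Real.exp_pos _) ?_
  rcases max_choice a b with h | h <;> rw [h] <;> linarith [Real.exp_pos a, Real.exp_pos b]

lemma suppFn_sup_sub_le_HS_midpoint (hSc : IsCompact S) (hne : S.Nonempty)
    (hSpos : ∀ s ∈ S, 0 ≤ s) (ζ ζ' : ι → ℝ) :
    suppFn S (ζ ⊔ ζ') - Real.log 2 * suppFn S 1 ≤
      HS S ((1 / 2 : ℝ) • ofRealExp ζ + (1 / 2 : ℝ) • ofRealExp ζ') := by
  set m := (1 / 2 : ℝ) • ofRealExp ζ + (1 / 2 : ℝ) • ofRealExp ζ'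
  have hm : ∀ i, m i = ((Real.exp (ζ i) + Real.exp (ζ' i)) / 2 : ℝ) := fun i => by
    simp only [m, ofRealExp, Pi.add_apply, Pi.smul_apply, Complex.real_smul]
    push_cast
    ring
  have hlog : ζ ⊔ ζ' - Real.log 2 • 1 ≤ fun i => Real.log ‖m i‖ := fun i => by
    simp only [Pi.sub_apply, Pi.sup_apply, Pi.smul_apply, Pi.one_apply, smul_eq_mul, mul_one]
    rw [hm i, Complex.norm_real, Real.norm_of_nonneg (by positivity)]
    exact max_sub_log_two_le_log_add_exp_div_two (ζ i) (ζ' i)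
  have hsplit := suppFn_add_le hSc hne (ζ ⊔ ζ' - Real.log 2 • 1) (Real.log 2 • 1)
  rw [sub_add_cancel, suppFn_smul (Real.log_nonneg one_le_two)] at hsplit
  rw [HS_eq_suppFn_log hSc fun i => by rw [hm]; exact_mod_cast (by positivity : (0 : ℝ) < _).ne']
  linarith [monotone_suppFn_s15 hSc hne hSpos hlog]

theorem not_convex_sublevel_HS (hSc : IsCompact S) (hS0 : 0 ∈ S) (hSpos : ∀ s ∈ S, 0 ≤ s)
    {ξ η : ι → ℝ} (hξ : suppFn S ξ ≤ 1) (hη : suppFn S η ≤ 1) (h : 1 < suppFn S (ξ ⊔ η)) :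
    ∃ t₀ > (0 : ℝ), ∀ t > t₀, ¬ Convex ℝ {z : ι → ℂ | HS S z ≤ t} := by
  have hC : 0 ≤ Real.log 2 * suppFn S 1 :=
    mul_nonneg (Real.log_nonneg one_le_two) (suppFn_nonneg_s15 hSc hS0 1)
  have hε : 0 < suppFn S (ξ ⊔ η) - 1 := sub_pos.2 h
  refine ⟨(Real.log 2 * suppFn S 1 + 1) / (suppFn S (ξ ⊔ η) - 1), by positivity,
    fun t ht hconv => ?_⟩
  have ht0 : 0 < t := lt_trans (by positivity) ht
  rw [gt_iff_lt, div_lt_iff₀ hε] at ht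
  have hsub : ∀ ζ : ι → ℝ, suppFn S ζ ≤ 1 → ofRealExp (t • ζ) ∈ {z : ι → ℂ | HS S z ≤ t} :=
    fun ζ hζ => by
      rw [Set.mem_ofPred_eq, HS_ofRealExp hSc, suppFn_smul ht0.le]
      exact mul_le_of_le_one_right ht0.le hζ
  have hmid : HS S ((1 / 2 : ℝ) • ofRealExp (t • ξ) + (1 / 2 : ℝ) • ofRealExp (t • η)) ≤ t :=
    hconv (hsub ξ hξ) (hsub η hη) (by norm_num) (by norm_num) (add_halves 1)
  have hlow := suppFn_sup_sub_le_HS_midpoint hSc ⟨0, hS0⟩ hSpos (t • ξ) (t • η)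
  rw [← smul_sup_of_nonneg ht0.le, suppFn_smul ht0.le] at hlow
  linarith

end LogSupportFunction

section Simplex

variable {ι : Type*} [Fintype ι] {S : Set (ι → ℝ)}

lemma suppFn_sup_le_max (hSc : IsCompact S) (hS0 : 0 ∈ S)
    (hsup : ∀ ξ η : ι → ℝ, suppFn S ξ ≤ 1 → suppFn S η ≤ 1 → suppFn S (ξ ⊔ η) ≤ 1)
    (ξ η : ι → ℝ) : suppFn S (ξ ⊔ η) ≤ max (suppFn S ξ) (suppFn S η) := by
  refine le_of_forall_gt_imp_ge_of_dense fun c hc => ?_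
  have hc0 : 0 < c := (suppFn_nonneg_s15 hSc hS0 ξ).trans_lt ((le_max_left _ _).trans_lt hc)
  have hscale : ∀ ζ : ι → ℝ, suppFn S ζ ≤ c ↔ suppFn S (c⁻¹ • ζ) ≤ 1 := fun ζ => by
    rw [suppFn_smul (inv_nonneg.2 hc0.le), inv_mul_le_iff₀ hc0, mul_one]
  rw [hscale, smul_sup_of_nonneg (inv_nonneg.2 hc0.le)]
  exact hsup _ _ ((hscale ξ).1 (max_lt_iff.1 hc).1.le) ((hscale η).1 (max_lt_iff.1 hc).2.le)

variable [DecidableEq ι]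

lemma suppFn_single_of_nonneg (i : ι) {a : ℝ} (ha : 0 ≤ a) :
    suppFn S (Pi.single i a) = a * suppFn S (Pi.single i 1) := by
  rw [← suppFn_smul ha, ← Pi.single_smul, smul_eq_mul, mul_one]

lemma suppFn_single_le (hSc : IsCompact S) (hS0 : 0 ∈ S) (hSpos : ∀ s ∈ S, 0 ≤ s)
    (i : ι) (a : ℝ) : suppFn S (Pi.single i a) ≤ max (a * suppFn S (Pi.single i 1)) 0 := by
  rcases le_total 0 a with ha | ha
  · exact (suppFn_single_of_nonneg i ha).le.trans (le_max_left _ _)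
  · calc suppFn S (Pi.single i a) ≤ suppFn S 0 :=
          monotone_suppFn_s15 hSc ⟨0, hS0⟩ hSpos (Pi.single_nonpos.2 ha)
      _ ≤ _ := suppFn_zero.le.trans (le_max_right _ _)

lemma suppFn_le_of_forall_single (hSc : IsCompact S) (hS0 : 0 ∈ S) (hSpos : ∀ s ∈ S, 0 ≤ s)
    (hmax : ∀ ξ η : ι → ℝ, suppFn S (ξ ⊔ η) ≤ max (suppFn S ξ) (suppFn S η))
    {ξ : ι → ℝ} {c : ℝ} (hc : 0 ≤ c) (h : ∀ i, suppFn S (Pi.single i (ξ i)) ≤ c) :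
    suppFn S ξ ≤ c := by
  rcases isEmpty_or_nonempty ι with hι | hι
  · exact suppFn_le_s15 ⟨0, hS0⟩ fun s _ => by simpa [dotProduct] using hc
  have hle : ξ ≤ Finset.univ.sup' Finset.univ_nonempty fun i => Pi.single i (ξ i) := fun i => by
    simpa only [Pi.single_eq_same] using
      Finset.le_sup' (fun j => Pi.single j (ξ j)) (Finset.mem_univ i) i
  refine (monotone_suppFn_s15 hSc ⟨0, hS0⟩ hSpos hle).trans ?_
  exact Finset.sup'_induction _ _ (p := fun ζ => suppFn S ζ ≤ c)
    (fun a ha b hb => (hmax a b).trans (max_le ha hb)) fun i _ => h i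

lemma ContinuousLinearMap.apply_eq_dotProduct_single (f : (ι → ℝ) →L[ℝ] ℝ) (y : ι → ℝ) :
    f y = y ⬝ᵥ fun i => f (Pi.single i 1) := by
  conv_lhs => rw [← Finset.univ_sum_single y]
  rw [map_sum, dotProduct]
  refine Finset.sum_congr rfl fun i _ => ?_
  rw [← smul_eq_mul, ← map_smul, ← Pi.single_smul', smul_eq_mul, mul_one]

lemma subset_convexHull_of_suppFn_sup_le_max (hSc : IsCompact S) (hS0 : 0 ∈ S)
    (hSpos : ∀ s ∈ S, 0 ≤ s)
    (hmax : ∀ ξ η : ι → ℝ, suppFn S (ξ ⊔ η) ≤ max (suppFn S ξ) (suppFn S η)) :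
    S ⊆ convexHull ℝ ({0} ∪ Set.range fun i => Pi.single i (suppFn S (Pi.single i 1))) := by
  set P : Set (ι → ℝ) := {0} ∪ Set.range fun i => Pi.single i (suppFn S (Pi.single i 1))
  intro s hs
  by_contra hsP
  have hPc : IsClosed (convexHull ℝ P) :=
    ((Set.finite_singleton 0).union (Set.finite_range _)).isCompact_convexHull (𝕜 := ℝ) |>.isClosed
  obtain ⟨f, u, hfP, hfs⟩ := geometric_hahn_banach_closed_point (convex_convexHull ℝ P) hPc hsP
  set ξ : ι → ℝ := fun i => f (Pi.single i 1)
  have hu : 0 < u := by simpa using hfP 0 (subset_convexHull ℝ P (Or.inl rfl))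
  have hvert : ∀ i, ξ i * suppFn S (Pi.single i 1) < u := fun i => by
    have := hfP _ (subset_convexHull ℝ P (Or.inr ⟨i, rfl⟩))
    rwa [f.apply_eq_dotProduct_single, single_dotProduct, mul_comm] at this
  have hξ : suppFn S ξ ≤ u := suppFn_le_of_forall_single hSc hS0 hSpos hmax hu.le fun i =>
    (suppFn_single_le hSc hS0 hSpos i (ξ i)).trans (max_le (hvert i).le hu.le)
  have hsξ := dotProduct_le_suppFn hSc hs ξ
  rw [← f.apply_eq_dotProduct_single] at hsξ
  linarith

lemma single_mem_of_suppFn_sup_le_max (hSc : IsCompact S) (hS0 : 0 ∈ S)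
    (hSpos : ∀ s ∈ S, 0 ≤ s)
    (hmax : ∀ ξ η : ι → ℝ, suppFn S (ξ ⊔ η) ≤ max (suppFn S ξ) (suppFn S η)) (i : ι) :
    Pi.single i (suppFn S (Pi.single i 1)) ∈ S := by
  set x : ι → ℝ := fun j => suppFn S (Pi.single j 1)
  obtain ⟨s, hs, hsi⟩ := exists_mem_suppFn_eq hSc ⟨0, hS0⟩ (Pi.single i 1)
  rw [dotProduct_single, mul_one] at hsi
  rcases (suppFn_nonneg_s15 hSc hS0 (Pi.single i 1)).eq_or_lt with hxi | hxi
  · rw [← hxi, Pi.single_zero]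
    exact hS0
  convert hs using 1
  ext j
  rcases eq_or_ne j i with rfl | hji
  · simp [hsi]
  rw [Pi.single_eq_of_ne hji]
  -- test `s` against `Pi.single i (x j / x i) ⊔ Pi.single j 1`: both pieces have `suppFn S = x j`
  have ha : 0 ≤ x j / x i := div_nonneg (suppFn_nonneg_s15 hSc hS0 _) hxi.le
  have hle : (Pi.single i (x j / x i) + Pi.single j 1 : ι → ℝ) ≤
      Pi.single i (x j / x i) ⊔ Pi.single j 1 := by
    intro k
    rcases eq_or_ne k i with rfl | hki
    · simp [hji.symm, ha]
    · simp [Pi.single_eq_of_ne hki]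
  have htest := ((dotProduct_le_dotProduct_of_nonneg_left hle (hSpos s hs)).trans
    (dotProduct_le_suppFn hSc hs _)).trans (hmax _ _)
  rw [dotProduct_add, dotProduct_single, dotProduct_single, mul_one, hsi,
    suppFn_single_of_nonneg i ha, div_mul_cancel₀ _ hxi.ne', mul_div_cancel₀ _ hxi.ne',
    max_self] at htest
  exact le_antisymm (hSpos s hs j) (by linarith)

theorem eq_convexHull_of_suppFn_sup_le (hSc : IsCompact S) (hSconv : Convex ℝ S) (hS0 : 0 ∈ S)
    (hSpos : ∀ s ∈ S, 0 ≤ s)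
    (hsup : ∀ ξ η : ι → ℝ, suppFn S ξ ≤ 1 → suppFn S η ≤ 1 → suppFn S (ξ ⊔ η) ≤ 1) :
    S = convexHull ℝ ({0} ∪ Set.range fun i => Pi.single i (suppFn S (Pi.single i 1))) := by
  have hmax := suppFn_sup_le_max hSc hS0 hsup
  refine (subset_convexHull_of_suppFn_sup_le_max hSc hS0 hSpos hmax).antisymm
    (convexHull_min ?_ hSconv)
  rintro _ (rfl | ⟨i, rfl⟩)
  exacts [hS0, single_mem_of_suppFn_sup_le_max hSc hS0 hSpos hmax i]

end Simplex

theorem stmt15_general (n : ℕ) (S : Set (Fin n → ℝ))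
    (hSc : IsCompact S) (hSconv : Convex ℝ S)
    (hSpos : ∀ s ∈ S, ∀ i, 0 ≤ s i) (hS0 : (0 : Fin n → ℝ) ∈ S)
    (hSnotsimplex : ∀ x : Fin n → ℝ, (∀ i, 0 ≤ x i) →
      S ≠ convexHull ℝ ({0} ∪ Set.range fun i => Pi.single i (x i))) :
    ∃ t₀ > (0 : ℝ), ∀ t > t₀, ¬ Convex ℝ {z : Fin n → ℂ | HS S z ≤ t} := by
  by_cases hsup : ∀ ξ η : Fin n → ℝ, suppFn S ξ ≤ 1 → suppFn S η ≤ 1 → suppFn S (ξ ⊔ η) ≤ 1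
  · exact absurd (eq_convexHull_of_suppFn_sup_le hSc hSconv hS0 hSpos hsup)
      (hSnotsimplex _ fun i => suppFn_nonneg_s15 hSc hS0 _)
  simp only [not_forall, not_le] at hsup
  obtain ⟨ξ, η, hξ, hη, h⟩ := hsup
  exact not_convex_sublevel_HS hSc hS0 hSpos hξ hη h

/-- Non-convexity of sublevel sets of `H_S` (Proposition 6 of the paper): if the compact
convex set `{0} ≠ S ⊆ ℝ^n_+`, `0 ∈ S`, is not a simplex `ch{0, x₁e₁, …, x_ne_n}`, then all
sublevel sets `{H_S ≤ t}` with `t` large enough are non-convex. -/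
theorem stmt15 (n : ℕ) (S : Set (Fin n → ℝ))
    (hSc : IsCompact S) (hSconv : Convex ℝ S)
    (hSpos : ∀ s ∈ S, ∀ i, 0 ≤ s i) (hS0 : (0 : Fin n → ℝ) ∈ S)
    (hSne : S ≠ {0})
    (hSnotsimplex : ∀ x : Fin n → ℝ, (∀ i, 0 ≤ x i) →
      S ≠ convexHull ℝ ({0} ∪ Set.range fun i => Pi.single i (x i))) :
    ∃ t₀ > (0 : ℝ), ∀ t > t₀, ¬ Convex ℝ {z : Fin n → ℂ | HS S z ≤ t} :=
  stmt15_general n S hSc hSconv hSpos hS0 hSnotsimplex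
end
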